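/- Let k ∈ ℕ and let M^{(k)} be the (2k+1)×(2k+1) symmetric matrix with entries M^{(k)}_{m,n} = −(1/2) Σ_{p even, 0 ≤ p ≤ 2k} Σ_{q=−p}^{p} A_{p,q}(p(p+1)+2k) W^{p,k}_{q,m,n}, where W^{p,k}_{q,m,n} = ∫_{S²} Y_{p,q} Y_{k,m} Y_{k,n} dS with real spherical harmonics, and where A_{0,0} = 0. Then the trace of M^{(k)} is zero. -/

import Mathlib

open scoped Real

noncomputable section

/-- Factorial extended to integers: zero for negative arguments. -/
def fact' (z : ℤ) : ℝ := if z < 0 then 0 else (Nat.factorial z.toNat : ℝ)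

/-- The Wigner 3-j symbol, defined via the Racah formula. -/
def w3j (l1 l2 l3 : ℕ) (m1 m2 m3 : ℤ) : ℝ :=
  if m1 + m2 + m3 = 0 ∧ |m1| ≤ (l1 : ℤ) ∧ |m2| ≤ (l2 : ℤ) ∧ |m3| ≤ (l3 : ℤ) ∧
      (l3 : ℤ) ≤ (l1 : ℤ) + (l2 : ℤ) ∧ |(l1 : ℤ) - (l2 : ℤ)| ≤ (l3 : ℤ) then
    (-1 : ℝ) ^ ((l1 : ℤ) - (l2 : ℤ) - m3) *
      Real.sqrt ((fact' ((l1 : ℤ) + l2 - l3) * fact' ((l1 : ℤ) - l2 + l3) *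
          fact' (-(l1 : ℤ) + l2 + l3) * fact' ((l1 : ℤ) - m1) * fact' ((l1 : ℤ) + m1) *
          fact' ((l2 : ℤ) - m2) * fact' ((l2 : ℤ) + m2) * fact' ((l3 : ℤ) - m3) *
          fact' ((l3 : ℤ) + m3)) / fact' ((l1 : ℤ) + l2 + l3 + 1)) *
      ∑ t ∈ Finset.range (l1 + l2 + l3 + 1),
        (-1 : ℝ) ^ t /
          (fact' t * fact' ((l3 : ℤ) - l2 + m1 + t) * fact' ((l3 : ℤ) - l1 - m2 + t) *
            fact' ((l1 : ℤ) + l2 - l3 - t) * fact' ((l1 : ℤ) - m1 - t) *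
            fact' ((l2 : ℤ) + m2 - t))
  else 0

/-- Associated Legendre function via the Rodrigues formula. -/
def assocLegendre (l : ℕ) (m : ℤ) (x : ℝ) : ℝ :=
  ((-1 : ℝ) ^ m / ((2 : ℝ) ^ l * (Nat.factorial l : ℝ))) * (1 - x ^ 2) ^ ((m : ℝ) / 2) *
    iteratedDeriv (m + l).toNat (fun y : ℝ => (y ^ 2 - 1) ^ l) x

/-- Complex spherical harmonic of degree `l` and order `m`. -/
def Ysph (l : ℕ) (m : ℤ) (θ φ : ℝ) : ℂ :=
  ((Real.sqrt ((2 * l + 1) / (4 * Real.pi) * (fact' ((l : ℤ) - m) / fact' ((l : ℤ) + m))) *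
      assocLegendre l m (Real.cos θ) : ℝ) : ℂ) * Complex.exp (Complex.I * m * φ)

/-- Real spherical harmonic of degree `l` and order `m`. -/
def Yre (l : ℕ) (m : ℤ) (θ φ : ℝ) : ℝ :=
  if m < 0 then
    (Complex.I / (Real.sqrt 2 : ℂ) * (Ysph l m θ φ - (-1 : ℂ) ^ m * Ysph l (-m) θ φ)).re
  else if m = 0 then (Ysph l 0 θ φ).re
  else ((1 / (Real.sqrt 2 : ℂ)) * (Ysph l (-m) θ φ + (-1 : ℂ) ^ m * Ysph l m θ φ)).re

/-- Integral over the unit sphere in spherical coordinates, `dS = sin θ dφ dθ`. -/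
def sphInt (f : ℝ → ℝ → ℝ) : ℝ :=
  ∫ θ in (0 : ℝ)..Real.pi, ∫ φ in (0 : ℝ)..(2 * Real.pi), f θ φ * Real.sin θ

end


noncomputable section
open Polynomial

open Polynomial

/-- `derivative^[n] ((X²-1)^l)` -/
def Upoly (l n : ℕ) : Polynomial ℝ := derivative^[n] ((X^2 - 1)^l)

lemma Upoly_succ (l n : ℕ) : Upoly l (n+1) = derivative (Upoly l n) := by
  simp [Upoly, Function.iterate_succ_apply']

lemma Upoly_zero (l : ℕ) : Upoly l 0 = (X^2-1)^l := rfl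

lemma Upoly_eq_zero (l n : ℕ) (h : 2*l < n) : Upoly l n = 0 := by
  apply Polynomial.iterate_derivative_eq_zero
  calc ((X^2-1:ℝ[X])^l).natDegree ≤ l * (X^2-1:ℝ[X]).natDegree := natDegree_pow_le
    _ ≤ l * 2 := by
        gcongr
        exact (natDegree_sub_le _ _).trans (by simp)
    _ < n := by omega

lemma derivX2 : derivative (X^2:ℝ[X]) = 2 * X := by
  simp [derivative_pow]; ring_nf; simp [map_ofNat]

lemma deriv_sq_sub_one : derivative (X^2 - 1:ℝ[X]) = 2 * X := by
  rw [derivative_sub, derivative_one, derivX2, sub_zero]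

lemma baseODE (l : ℕ) :
    (X^2 - 1) * Upoly l 1 = 2*(l:ℝ[X]) * X * Upoly l 0 := by
  rw [Upoly_succ, Upoly_zero, derivative_pow, deriv_sq_sub_one]
  rcases Nat.eq_zero_or_pos l with h | h
  · subst h; simp
  · have e1 : l = (l-1) + 1 := by omega
    have h1 : (X^2 - 1:ℝ[X]) * (C (l:ℝ) * (X^2-1)^(l-1) * (2 * X)) =
        2 * C (l:ℝ) * X * ((X^2-1)^(l-1) * (X^2-1)) := by ring
    rw [h1, ← pow_succ, ← e1, C_eq_natCast]

lemma recODE (l : ℕ) : ∀ n : ℕ,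
    (X^2 - 1) * Upoly l (n+2) =
      (2*(l:ℝ[X]) - 2*((n:ℝ[X])+1)) * X * Upoly l (n+1)
        + ((n:ℝ[X])+1)*(2*(l:ℝ[X])-(n:ℝ[X])) * Upoly l n := by
  intro n
  induction n with
  | zero =>
      have h := congrArg derivative (baseODE l)
      simp only [derivative_mul, deriv_sq_sub_one, derivative_natCast, derivative_X,
        derivative_ofNat, ← Upoly_succ] at h
      have : (X^2-1) * Upoly l (0+2) =
          2*(l:ℝ[X]) * Upoly l 0 + 2*(l:ℝ[X]) * X * Upoly l 1 - 2 * X * Upoly l 1 := by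
        show (X^2-1) * Upoly l 2 = _
        linear_combination h
      rw [this]
      push_cast
      ring
  | succ n ih =>
      have h := congrArg derivative ih
      simp only [derivative_mul, derivative_add, derivative_sub, derivX2, derivative_natCast,
        derivative_X, derivative_ofNat, derivative_one, ← Upoly_succ] at h
      have : (X^2-1) * Upoly l (n+1+2) =
          (2*(l:ℝ[X]) - 2*((n:ℝ[X])+1)) * Upoly l (n+1)
          + (2*(l:ℝ[X]) - 2*((n:ℝ[X])+1)) * X * Upoly l (n+2)
          + ((n:ℝ[X])+1)*(2*(l:ℝ[X])-(n:ℝ[X])) * Upoly l (n+1) - 2 * X * Upoly l (n+2) := by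
        show (X^2-1) * Upoly l (n+3) = _
        linear_combination h
      rw [this]
      push_cast
      ring

lemma divPow (l : ℕ) : ∀ n, n ≤ l → (X^2 - 1:ℝ[X])^(l-n) ∣ Upoly l n := by
  intro n
  induction n with
  | zero => intro _; simp [Upoly_zero]
  | succ n ih =>
      intro h
      obtain ⟨q, hq⟩ := ih (by omega)
      have e1 : l - n = (l-(n+1))+1 := by omega
      rw [Upoly_succ, hq, e1, derivative_mul, derivative_pow, deriv_sq_sub_one,
        Nat.add_sub_cancel]
      exact ⟨C (((l-(n+1)+1 : ℕ)):ℝ) * (2 * X) * q + (X^2-1) * derivative q,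
        by rw [pow_succ]; ring⟩

lemma Upoly_eval_one (l n : ℕ) (h : n < l) : (Upoly l n).eval 1 = 0 := by
  obtain ⟨q, hq⟩ := divPow l n (by omega)
  rw [hq]
  have : l - n ≠ 0 := by omega
  simp [eval_pow, zero_pow this]

lemma Upoly_eval_neg_one (l n : ℕ) (h : n < l) : (Upoly l n).eval (-1) = 0 := by
  obtain ⟨q, hq⟩ := divPow l n (by omega)
  rw [hq]
  have : l - n ≠ 0 := by omega
  simp [eval_pow, zero_pow this]

lemma poly_eq_of_deriv_eq {p q : ℝ[X]} (h : derivative p = derivative q)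
    (h1 : p.eval 1 = q.eval 1) : p = q := by
  have hd : derivative (p - q) = 0 := by rw [derivative_sub, h, sub_self]
  have h3 : p - q = C ((p-q).coeff 0) := eq_C_of_derivative_eq_zero hd
  have h4 : (p-q).coeff 0 = 0 := by
    have h5 := congrArg (eval 1) h3
    simp [h1] at h5
    simp only [coeff_sub]
    linarith
  have h6 : p - q = 0 := by rw [h3, h4, map_zero]
  exact sub_eq_zero.mp h6


lemma relR (k : ℕ) : ∀ n, n ≤ k →
    ((k+n).factorial : ℝ[X]) * Upoly k (k-n)
      = ((k-n).factorial : ℝ[X]) * ((X^2-1)^n * Upoly k (k+n)) := by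
  intro n
  induction n with
  | zero => intro _; simp
  | succ n ih =>
      intro h
      have ihh := ih (by omega)
      obtain ⟨b, rfl⟩ : ∃ b, k = n+1+b := ⟨k-(n+1), by omega⟩
      have e1 : n+1+b - n = b+1 := by omega
      have e2 : n+1+b - (n+1) = b := by omega
      rw [e1] at ihh
      rw [e2]
      apply poly_eq_of_deriv_eq
      · rw [derivative_mul, derivative_mul, derivative_natCast, derivative_natCast,
          ← Upoly_succ, derivative_mul, derivative_pow, deriv_sq_sub_one, ← Upoly_succ,
          Nat.add_sub_cancel, C_eq_natCast]
        have hrec := recODE (n+1+b) (n+1+b+n)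
        have hf1 : (((n+1+b)+(n+1)).factorial : ℝ[X])
            = ((((n+1+b+n : ℕ)) : ℝ[X]) + 1) * ((n+1+b+n).factorial : ℝ[X]) := by
          rw [show (n+1+b)+(n+1) = (n+1+b+n)+1 from by omega, Nat.factorial_succ]
          push_cast; ring
        simp only [show n+1+b+(n+1)+1 = n+1+b+n+2 from by omega,
          show n+1+b+(n+1) = n+1+b+n+1 from by omega,
          show n+1+b+n+1+1 = n+1+b+n+2 from by omega,
          show (n+1+b+n)+1 = n+1+b+n+1 from by omega] at hf1 ⊢
        rw [hf1, show ((b+1).factorial) = (b+1)*b.factorial from Nat.factorial_succ b] at *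
        push_cast at hrec ihh ⊢
        linear_combination (-(b.factorial:ℝ[X]) * (X^2-1)^n) * hrec
          + (2*(n:ℝ[X]) + (b:ℝ[X]) + 2) * ihh
      · have h1 : (Upoly (n+1+b) b).eval 1 = 0 := Upoly_eval_one _ _ (by omega)
        simp [eval_mul, eval_pow, h1]

def dk (k n : ℕ) : ℝ := ((k-n).factorial : ℝ) / ((k+n).factorial : ℝ)

lemma hdk_succ (k N : ℕ) (h : N + 1 ≤ k) :
    C (dk k N) = C (dk k (N+1)) * (((k+N+1)*(k-N) : ℕ) : ℝ[X]) := by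
  rw [← C_eq_natCast, ← C_mul]
  congr 1
  obtain ⟨b, rfl⟩ : ∃ b, k = N+1+b := ⟨k-(N+1), by omega⟩
  have e1 : N+1+b - N = b+1 := by omega
  have e2 : N+1+b - (N+1) = b := by omega
  have e3 : N+1+b+(N+1) = (N+1+b+N)+1 := by omega
  rw [dk, dk, e1, e2, e3, Nat.factorial_succ, Nat.factorial_succ]
  have h1 : ((N+1+b+N).factorial : ℝ) ≠ 0 := Nat.cast_ne_zero.mpr (Nat.factorial_ne_zero _)
  field_simp
  push_cast
  ring

def Hsum (k : ℕ) : ℝ[X] :=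
  ∑ n ∈ Finset.range (k+1),
    C (dk k n) * ((if n = 0 then 1 else 2) * ((1 - X^2)^n * (Upoly k (k+n))^2))

lemma tele (k : ℕ) : ∀ N, N ≤ k →
    derivative (∑ n ∈ Finset.range (N+1),
        C (dk k n) * ((if n = 0 then 1 else 2) * ((1 - X^2)^n * (Upoly k (k+n))^2)))
      = C (dk k N) * (2 * ((1-X^2)^N * (Upoly k (k+N) * Upoly k (k+N+1)))) := by
  intro N
  induction N with
  | zero =>
      intro _
      rw [Finset.sum_range_one, if_pos rfl]
      simp only [pow_zero, one_mul, Nat.add_zero]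
      rw [derivative_C_mul, derivative_pow, ← Upoly_succ]
      simp only [C_eq_natCast]
      push_cast
      ring
  | succ N ih =>
      intro h
      rw [Finset.sum_range_succ, derivative_add, ih (by omega)]
      have hne : (N+1 : ℕ) ≠ 0 := by omega
      rw [if_neg hne, derivative_C_mul, derivative_mul, derivative_mul, derivative_pow,
        derivative_pow, ← Upoly_succ]
      have hd2 : derivative (1 - X^2 : ℝ[X]) = -(2*X) := by
        rw [show (1 - X^2 : ℝ[X]) = -(X^2-1) from by ring, derivative_neg, deriv_sq_sub_one]
      rw [hd2, derivative_ofNat]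
      have hrec := recODE k (k+N)
      have hdk := hdk_succ k N h
      have hsub : ((k-N:ℕ):ℝ[X]) = (k:ℝ[X]) - (N:ℝ[X]) := by
        rw [Nat.cast_sub (by omega)]
      push_cast [hsub] at hdk
      simp only [C_eq_natCast, show (2-1 : ℕ) = 1 from rfl, pow_one,
        show k+(N+1) = k+N+1 from rfl, Nat.add_sub_cancel] at hrec ⊢
      push_cast at hrec ⊢
      linear_combination (-(2*(1-X^2)^N * Upoly k (k+N+1)) * C (dk k (N+1))) * hrec
        + (2*(1-X^2)^N * Upoly k (k+N+1) * Upoly k (k+N)) * hdk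


lemma Hsum_deriv_zero (k : ℕ) : derivative (Hsum k) = 0 := by
  rw [Hsum, tele k k le_rfl, Upoly_eq_zero k (k+k+1) (by omega)]
  simp

lemma Hsum_eval (k : ℕ) (x : ℝ) : (Hsum k).eval x = (Hsum k).coeff 0 := by
  rw [eq_C_of_derivative_eq_zero (Hsum_deriv_zero k)]
  simp

/-- radial factor of the complex spherical harmonic -/
def rfct (l : ℕ) (m : ℤ) (θ : ℝ) : ℝ :=
  Real.sqrt ((2 * l + 1) / (4 * Real.pi) * (fact' ((l : ℤ) - m) / fact' ((l : ℤ) + m))) *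
    assocLegendre l m (Real.cos θ)

lemma Ysph_eq (l : ℕ) (m : ℤ) (θ φ : ℝ) :
    Ysph l m θ φ = (rfct l m θ : ℂ) * Complex.exp (Complex.I * m * φ) := rfl

lemma exp_eq (m : ℤ) (φ : ℝ) :
    Complex.exp (Complex.I * m * φ)
      = (Real.cos (m*φ) : ℂ) + (Real.sin (m*φ) : ℂ) * Complex.I := by
  have h1 : Complex.I * (m:ℂ) * (φ:ℂ) = ((m*φ : ℝ) : ℂ) * Complex.I := by
    push_cast; ring
  rw [h1, Complex.exp_mul_I, Complex.ofReal_cos, Complex.ofReal_sin]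

/-- θ-factor shared by the order `n` and `-n` real spherical harmonics -/
def Sfct (l n : ℕ) (θ : ℝ) : ℝ := rfct l (-(n:ℤ)) θ + (-1:ℝ)^n * rfct l (n:ℤ) θ

lemma Yre_zero (l : ℕ) (θ φ : ℝ) : Yre l 0 θ φ = rfct l 0 θ := by
  rw [Yre]
  norm_num
  rw [Ysph_eq, exp_eq]
  push_cast
  simp

lemma Yre_pos (l : ℕ) (n : ℕ) (hn : n ≠ 0) (θ φ : ℝ) :
    Yre l (n:ℤ) θ φ = (Sfct l n θ * (Real.sqrt 2)⁻¹) * Real.cos (n*φ) := by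
  rw [Yre, if_neg (by omega), if_neg (by exact_mod_cast hn)]
  rw [Ysph_eq, Ysph_eq, exp_eq, exp_eq]
  have h1 : ((-1:ℂ)^(n:ℤ)) = (((-1:ℝ)^n : ℝ) : ℂ) := by
    rw [zpow_natCast]; push_cast; ring
  have h2 : (1 / ((Real.sqrt 2 : ℝ) : ℂ)) = (((Real.sqrt 2)⁻¹ : ℝ) : ℂ) := by
    push_cast; ring
  rw [h1, h2]
  simp only [Int.cast_neg, Int.cast_natCast, neg_mul, Real.cos_neg, Real.sin_neg,
    Complex.ofReal_neg]
  have e1 : ((-1:ℂ)^n).re = (-1:ℝ)^n := by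
    have : ((-1:ℂ))^n = (((-1:ℝ)^n :ℝ):ℂ) := by push_cast; ring
    rw [this, Complex.ofReal_re]
  have e2 : ((-1:ℂ)^n).im = 0 := by
    have : ((-1:ℂ))^n = (((-1:ℝ)^n :ℝ):ℂ) := by push_cast; ring
    rw [this, Complex.ofReal_im]
  have h5 : (Real.sqrt 2)⁻¹ = Real.sqrt 2 / 2 := by
    have hne : Real.sqrt 2 ≠ 0 := by positivity
    rw [inv_eq_one_div, div_eq_div_iff hne (by norm_num : (2:ℝ) ≠ 0), one_mul,
      Real.mul_self_sqrt (by norm_num : (0:ℝ) ≤ 2)]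
  have e3 : ((n:ℂ))*(φ:ℂ) = (((n:ℝ)*φ : ℝ):ℂ) := by push_cast; ring
  have e4 : (Complex.cos ((n:ℂ)*(φ:ℂ))).re = Real.cos ((n:ℝ)*φ) := by
    rw [e3, Complex.cos_ofReal_re]
  have e5 : (Complex.cos ((n:ℂ)*(φ:ℂ))).im = 0 := by rw [e3, Complex.cos_ofReal_im]
  have e6 : (Complex.sin ((n:ℂ)*(φ:ℂ))).re = Real.sin ((n:ℝ)*φ) := by
    rw [e3, Complex.sin_ofReal_re]
  have e7 : (Complex.sin ((n:ℂ)*(φ:ℂ))).im = 0 := by rw [e3, Complex.sin_ofReal_im]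
  simp [Complex.add_re, Complex.mul_re, Complex.ofReal_re, Complex.ofReal_im,
    Complex.I_re, Complex.I_im, Sfct, e1, e2, Complex.cos_ofReal_re, Complex.cos_ofReal_im,
    Complex.sin_ofReal_re, Complex.sin_ofReal_im, h5, e4, e5, e6, e7]
  ring

lemma Yre_neg (l : ℕ) (n : ℕ) (hn : n ≠ 0) (θ φ : ℝ) :
    Yre l (-(n:ℤ)) θ φ = (Sfct l n θ * (Real.sqrt 2)⁻¹) * Real.sin (n*φ) := by
  rw [Yre, if_pos (by omega), neg_neg]
  rw [Ysph_eq, Ysph_eq, exp_eq, exp_eq]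
  have h1 : ((-1:ℂ)^(-(n:ℤ))) = (((-1:ℝ)^n : ℝ) : ℂ) := by
    rw [zpow_neg, zpow_natCast]
    push_cast
    rw [← inv_pow]
    norm_num
  have h2 : Complex.I / ((Real.sqrt 2 : ℝ) : ℂ) = (((Real.sqrt 2)⁻¹ : ℝ) : ℂ) * Complex.I := by
    have hne : ((Real.sqrt 2 : ℝ) : ℂ) ≠ 0 :=
      Complex.ofReal_ne_zero.mpr (by positivity)
    field_simp
    rw [← Complex.ofReal_mul, mul_one_div_cancel (by positivity), Complex.ofReal_one]
  rw [h1, h2]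
  simp only [Int.cast_neg, Int.cast_natCast, neg_mul, Real.cos_neg, Real.sin_neg,
    Complex.ofReal_neg]
  have e1 : ((-1:ℂ)^n).re = (-1:ℝ)^n := by
    have : ((-1:ℂ))^n = (((-1:ℝ)^n :ℝ):ℂ) := by push_cast; ring
    rw [this, Complex.ofReal_re]
  have e2 : ((-1:ℂ)^n).im = 0 := by
    have : ((-1:ℂ))^n = (((-1:ℝ)^n :ℝ):ℂ) := by push_cast; ring
    rw [this, Complex.ofReal_im]
  have h5 : (Real.sqrt 2)⁻¹ = Real.sqrt 2 / 2 := by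
    have hne : Real.sqrt 2 ≠ 0 := by positivity
    rw [inv_eq_one_div, div_eq_div_iff hne (by norm_num : (2:ℝ) ≠ 0), one_mul,
      Real.mul_self_sqrt (by norm_num : (0:ℝ) ≤ 2)]
  have e3 : ((n:ℂ))*(φ:ℂ) = (((n:ℝ)*φ : ℝ):ℂ) := by push_cast; ring
  have e4 : (Complex.cos ((n:ℂ)*(φ:ℂ))).re = Real.cos ((n:ℝ)*φ) := by
    rw [e3, Complex.cos_ofReal_re]
  have e5 : (Complex.cos ((n:ℂ)*(φ:ℂ))).im = 0 := by rw [e3, Complex.cos_ofReal_im]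
  have e6 : (Complex.sin ((n:ℂ)*(φ:ℂ))).re = Real.sin ((n:ℝ)*φ) := by
    rw [e3, Complex.sin_ofReal_re]
  have e7 : (Complex.sin ((n:ℂ)*(φ:ℂ))).im = 0 := by rw [e3, Complex.sin_ofReal_im]
  simp [Complex.sub_re, Complex.sub_im, Complex.add_re, Complex.mul_re, Complex.add_im,
    Complex.mul_im, Complex.ofReal_re, Complex.ofReal_im, Complex.I_re, Complex.I_im, Sfct,
    e1, e2, Complex.cos_ofReal_re, Complex.cos_ofReal_im, Complex.sin_ofReal_re,
    Complex.sin_ofReal_im, h5, e4, e5, e6, e7]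
  ring



section TrigInt
open intervalIntegral

lemma integral_cos_nat (n : ℕ) (hn : n ≠ 0) :
    ∫ φ in (0:ℝ)..(2*π), Real.cos (n*φ) = 0 := by
  have hc : (n:ℝ) ≠ 0 := Nat.cast_ne_zero.mpr hn
  rw [intervalIntegral.integral_comp_mul_left (fun x => Real.cos x) hc, integral_cos]
  have h1 : Real.sin ((n:ℝ)*(2*π)) = 0 := by
    have h : (n:ℝ)*(2*π) = ((2*(n:ℤ) : ℤ):ℝ)*π := by push_cast; ring
    rw [h, Real.sin_int_mul_pi]
  simp [h1]

lemma integral_sin_nat (n : ℕ) (hn : n ≠ 0) :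
    ∫ φ in (0:ℝ)..(2*π), Real.sin (n*φ) = 0 := by
  have hc : (n:ℝ) ≠ 0 := Nat.cast_ne_zero.mpr hn
  rw [intervalIntegral.integral_comp_mul_left (fun x => Real.sin x) hc, integral_sin]
  have h1 : Real.cos ((n:ℝ)*(2*π)) = 1 := by
    have h : (n:ℝ)*(2*π) = ((n : ℤ):ℝ)*(2*π) := by push_cast; ring
    rw [h, Real.cos_int_mul_two_pi]
  simp [h1]

end TrigInt

lemma sum_fin (k : ℕ) (g : ℤ → ℝ) :
    ∑ i : Fin (2*k+1), g ((i:ℤ) - k)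
      = g 0 + ∑ t ∈ Finset.range k, (g ((t:ℤ)+1) + g (-((t:ℤ)+1))) := by
  rw [Fin.sum_univ_eq_sum_range (fun j => g ((j:ℤ) - k))]
  have h2 : 2*k+1 = k + (k+1) := by omega
  rw [h2, Finset.sum_range_add]
  have hneg : ∑ j ∈ Finset.range k, g ((j:ℤ) - k)
      = ∑ t ∈ Finset.range k, g (-((t:ℤ)+1)) := by
    rw [← Finset.sum_range_reflect]
    apply Finset.sum_congr rfl
    intro t ht
    have h := Finset.mem_range.mp ht
    congr 1
    omega
  have hpos : ∑ j ∈ Finset.range (k+1), g (((k + j :ℕ):ℤ) - k)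
      = g 0 + ∑ t ∈ Finset.range k, g ((t:ℤ)+1) := by
    rw [Finset.sum_range_succ']
    have e0 : (((k + 0 :ℕ):ℤ) - k) = 0 := by omega
    rw [e0, add_comm]
    congr 1
    apply Finset.sum_congr rfl
    intro t ht
    congr 1
    omega
  rw [hneg, hpos, Finset.sum_add_distrib]
  ring



lemma iteratedDeriv_polyEval (p : ℝ[X]) : ∀ (n : ℕ) (x : ℝ),
    iteratedDeriv n (fun y => p.eval y) x = (derivative^[n] p).eval x := by
  intro n
  induction n with
  | zero => intro x; simp
  | succ n ih =>
      intro x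
      rw [iteratedDeriv_succ]
      have h : iteratedDeriv n (fun y => p.eval y) = fun y => (derivative^[n] p).eval y :=
        funext ih
      rw [h, Function.iterate_succ_apply']
      exact Polynomial.deriv (𝕜 := ℝ) _

lemma iterDeriv_eq_Upoly (l n : ℕ) (x : ℝ) :
    iteratedDeriv n (fun y : ℝ => (y^2-1)^l) x = (Upoly l n).eval x := by
  have h : (fun y : ℝ => (y^2-1)^l) = fun y => ((X^2-1:ℝ[X])^l).eval y := by
    funext y; simp
  rw [h, iteratedDeriv_polyEval]; rfl

lemma fact'_coe (m : ℕ) : fact' (m:ℤ) = m.factorial := by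
  rw [fact', if_neg (by omega)]
  simp

lemma rpow_nat_half_sq (t : ℝ) (ht : 0 ≤ t) (n : ℕ) :
    (t ^ ((n:ℝ)/2))^2 = t ^ n := by
  rw [← Real.rpow_natCast (t ^ ((n:ℝ)/2)) 2, ← Real.rpow_mul ht, ← Real.rpow_natCast t n]
  norm_num

lemma rpow_neg_half (t : ℝ) (ht : 0 ≤ t) (n : ℕ) (hn : n ≠ 0) :
    t ^ (-(n:ℝ)/2) * t ^ n = t ^ ((n:ℝ)/2) := by
  rcases eq_or_lt_of_le ht with h | h
  · rw [← h, zero_pow hn, Real.zero_rpow (by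
      intro hcon
      have h9 : (n:ℝ) = 0 := by
        have h8 : -(n:ℝ) = 0 := by linarith [div_eq_zero_iff.mp hcon]
        linarith
      exact hn (by exact_mod_cast h9)), mul_zero,
      Real.zero_rpow (by positivity)]
  · rw [← Real.rpow_natCast t n, ← Real.rpow_add h]
    congr 1
    ring

lemma integral_Upoly_cos (p : ℕ) (hp : 1 ≤ p) :
    ∫ θ in (0:ℝ)..π, (Upoly p p).eval (Real.cos θ) * Real.sin θ = 0 := by
  have key : ∀ θ ∈ Set.uIcc (0:ℝ) π,
      HasDerivAt (fun u => -(Upoly p (p-1)).eval (Real.cos u))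
        ((Upoly p p).eval (Real.cos θ) * Real.sin θ) θ := by
    intro θ _
    have h1 : HasDerivAt (fun u : ℝ => Real.cos u) (-Real.sin θ) θ := Real.hasDerivAt_cos θ
    have h2 := (Polynomial.hasDerivAt (Upoly p (p-1)) (Real.cos θ)).comp θ h1
    have h4 : derivative (Upoly p (p-1)) = Upoly p p := by
      rw [← Upoly_succ]; congr 1; omega
    rw [h4] at h2
    have h5 := h2.neg
    exact h5.congr_deriv (by ring)
  rw [intervalIntegral.integral_eq_sub_of_hasDerivAt key
    (Continuous.intervalIntegrable
      (((Upoly p p).continuous).comp Real.continuous_cos |>.mul Real.continuous_sin) _ _)]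
  simp [Real.cos_pi, Upoly_eval_one p (p-1) (by omega), Upoly_eval_neg_one p (p-1) (by omega)]


lemma rfct_zero_eq (l : ℕ) (θ : ℝ) :
    rfct l 0 θ = Real.sqrt ((2*l+1)/(4*Real.pi)) * ((2:ℝ)^l * l.factorial)⁻¹ *
      (Upoly l l).eval (Real.cos θ) := by
  rw [rfct, assocLegendre]
  rw [show ((l:ℤ) - 0) = (l:ℤ) from by ring, show ((l:ℤ) + 0) = (l:ℤ) from by ring, fact'_coe]
  rw [div_self (Nat.cast_ne_zero.mpr (Nat.factorial_ne_zero l)), mul_one]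
  rw [show ((0:ℤ) + l).toNat = l from by simp, iterDeriv_eq_Upoly]
  rw [show (((0:ℤ)):ℝ)/2 = 0 from by norm_num, Real.rpow_zero]
  rw [show ((-1:ℝ)^(0:ℤ)) = 1 from zpow_zero _]
  ring

lemma rfct_zero_sq (l : ℕ) (θ : ℝ) :
    rfct l 0 θ^2 = ((2*l+1)/(4*Real.pi)) * (((2:ℝ)^l * l.factorial)⁻¹)^2 *
      (Upoly l l).eval (Real.cos θ)^2 := by
  rw [rfct_zero_eq, mul_pow, mul_pow, Real.sq_sqrt (by positivity)]

lemma Sfct_eq (k n : ℕ) (h1 : n ≠ 0) (h2 : n ≤ k) (θ : ℝ) :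
    Sfct k n θ = 2 * Real.sqrt ((2*k+1)/(4*Real.pi) * ((k-n).factorial/((k+n).factorial :ℝ))) *
      ((2:ℝ)^k * k.factorial)⁻¹ * (1-Real.cos θ^2) ^ ((n:ℝ)/2) *
      (Upoly k (k+n)).eval (Real.cos θ) := by
  have hx : Real.cos θ^2 ≤ 1 := Real.cos_sq_le_one θ
  set x := Real.cos θ with hxdef
  have ht : (0:ℝ) ≤ 1 - x^2 := by nlinarith
  have hkn : ((k+n).factorial:ℝ) ≠ 0 := Nat.cast_ne_zero.mpr (Nat.factorial_ne_zero _)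
  have hkmn : ((k-n).factorial:ℝ) ≠ 0 := Nat.cast_ne_zero.mpr (Nat.factorial_ne_zero _)
  have hrel := congrArg (Polynomial.eval x) (relR k n h2)
  simp only [Polynomial.eval_mul, Polynomial.eval_natCast, Polynomial.eval_pow,
    Polynomial.eval_sub, Polynomial.eval_one, Polynomial.eval_X] at hrel
  have hU : (Upoly k (k-n)).eval x
      = ((k-n).factorial/((k+n).factorial:ℝ)) * ((x^2-1)^n * (Upoly k (k+n)).eval x) := by
    field_simp
    linear_combination hrel
  have hA_neg : assocLegendre k (-(n:ℤ)) x
      = ((k-n).factorial/((k+n).factorial:ℝ)) * ((2:ℝ)^k*k.factorial)⁻¹ *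
        (1-x^2) ^ ((n:ℝ)/2) * (Upoly k (k+n)).eval x := by
    rw [assocLegendre, show ((-(n:ℤ))+k).toNat = k - n from by omega, iterDeriv_eq_Upoly, hU]
    rw [show ((-1:ℝ)^(-(n:ℤ))) = (-1:ℝ)^n from by
      rw [zpow_neg, zpow_natCast, ← inv_pow, inv_neg, inv_one]]
    push_cast
    rw [show ((x:ℝ)^2-1)^n = (-1:ℝ)^n * (1-x^2)^n from by
      rw [show (x^2-1:ℝ) = -(1-x^2) from by ring, neg_pow]]
    have hcomb := rpow_neg_half (1-x^2) ht n h1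
    have hsq : (-1:ℝ)^n*(-1:ℝ)^n = 1 := by
      rw [← pow_add, ← two_mul, pow_mul]
      norm_num
    linear_combination (((-1:ℝ)^n*(-1:ℝ)^n) * ((k-n).factorial/((k+n).factorial:ℝ)) /
        ((2:ℝ)^k*k.factorial) * (Upoly k (k+n)).eval x) * hcomb
      + (((k-n).factorial/((k+n).factorial:ℝ)) / ((2:ℝ)^k*k.factorial) *
        (1-x^2) ^ ((n:ℝ)/2) * (Upoly k (k+n)).eval x) * hsq
  have hA_pos : assocLegendre k (n:ℤ) x
      = (-1:ℝ)^n * ((2:ℝ)^k*k.factorial)⁻¹ * (1-x^2) ^ ((n:ℝ)/2) *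
        (Upoly k (k+n)).eval x := by
    rw [assocLegendre, show ((n:ℤ)+k).toNat = n + k from by omega, iterDeriv_eq_Upoly,
      show Upoly k (n+k) = Upoly k (k+n) from by rw [Nat.add_comm],
      show ((-1:ℝ)^((n:ℤ))) = (-1:ℝ)^n from zpow_natCast _ _,
      show ((((n:ℤ)):ℝ))/2 = ((n:ℝ))/2 from by push_cast; ring]
    ring
  have hf1 : fact' ((k:ℤ) - (n:ℤ)) = ((k-n).factorial : ℝ) := by
    rw [show (k:ℤ) - n = ((k-n:ℕ):ℤ) from by omega, fact'_coe]
  have hf2 : fact' ((k:ℤ) + (n:ℤ)) = ((k+n).factorial : ℝ) := by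
    rw [show (k:ℤ) + n = ((k+n:ℕ):ℤ) from by push_cast; ring, fact'_coe]
  have hf3 : fact' ((k:ℤ) - (-(n:ℤ))) = ((k+n).factorial : ℝ) := by
    rw [show (k:ℤ) - (-(n:ℤ)) = ((k+n:ℕ):ℤ) from by push_cast; ring, fact'_coe]
  have hf4 : fact' ((k:ℤ) + (-(n:ℤ))) = ((k-n).factorial : ℝ) := by
    rw [show (k:ℤ) + (-(n:ℤ)) = ((k-n:ℕ):ℤ) from by omega, fact'_coe]
  rw [Sfct, rfct, rfct, hf1, hf2, hf3, hf4, ← hxdef, hA_neg, hA_pos]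
  have hs : Real.sqrt ((2*k+1)/(4*Real.pi) * ((k+n).factorial/((k-n).factorial:ℝ)))
        * ((k-n).factorial/((k+n).factorial:ℝ))
      = Real.sqrt ((2*k+1)/(4*Real.pi) * ((k-n).factorial/((k+n).factorial:ℝ))) := by
    rw [show ((k-n).factorial/((k+n).factorial:ℝ))
        = Real.sqrt (((k-n).factorial/((k+n).factorial:ℝ))^2) from
        (Real.sqrt_sq (by positivity)).symm, ← Real.sqrt_mul (by positivity)]
    congr 1
    rw [Real.sqrt_sq (by positivity)]
    field_simp
  have hsq : (-1:ℝ)^n*(-1:ℝ)^n = 1 := by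
    rw [← pow_add, ← two_mul, pow_mul]
    norm_num
  linear_combination (((2:ℝ)^k*k.factorial)⁻¹ * (1-x^2) ^ ((n:ℝ)/2) *
      (Upoly k (k+n)).eval x) * hs
    + (Real.sqrt ((2*k+1)/(4*Real.pi) * ((k-n).factorial/((k+n).factorial:ℝ))) *
      ((2:ℝ)^k*k.factorial)⁻¹ * (1-x^2) ^ ((n:ℝ)/2) * (Upoly k (k+n)).eval x) * hsq

lemma Sfct_sq (k n : ℕ) (h1 : n ≠ 0) (h2 : n ≤ k) (θ : ℝ) :
    Sfct k n θ^2 = ((2*k+1)/(4*Real.pi)) * (((2:ℝ)^k * k.factorial)⁻¹)^2 *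
      (4 * ((k-n).factorial/((k+n).factorial:ℝ)) * (1-Real.cos θ^2)^n *
        (Upoly k (k+n)).eval (Real.cos θ)^2) := by
  have hx : Real.cos θ^2 ≤ 1 := Real.cos_sq_le_one θ
  have ht : (0:ℝ) ≤ 1 - Real.cos θ^2 := by nlinarith
  rw [Sfct_eq k n h1 h2 θ]
  rw [mul_pow, mul_pow, mul_pow, mul_pow, Real.sq_sqrt (by positivity),
    rpow_nat_half_sq _ ht]
  ring


lemma sphInt_factored (F : ℝ → ℝ → ℝ) (c : ℝ → ℝ) (u : ℝ → ℝ)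
    (h : ∀ θ φ, F θ φ * Real.sin θ = c θ * u φ) :
    sphInt F = (∫ θ in (0:ℝ)..π, c θ) * (∫ φ in (0:ℝ)..(2*π), u φ) := by
  rw [sphInt]
  have h2 : ∀ θ, (∫ φ in (0:ℝ)..(2*π), F θ φ * Real.sin θ)
      = c θ * (∫ φ in (0:ℝ)..(2*π), u φ) := by
    intro θ
    rw [show (fun φ => F θ φ * Real.sin θ) = fun φ => c θ * u φ from funext fun φ => h θ φ]
    exact intervalIntegral.integral_const_mul _ _
  have h3 := intervalIntegral.integral_congr (a := (0:ℝ)) (b := π)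
    (μ := MeasureTheory.volume)
    (f := fun θ => ∫ φ in (0:ℝ)..(2*π), F θ φ * Real.sin θ)
    (g := fun θ => c θ * (∫ φ in (0:ℝ)..(2*π), u φ)) (fun θ _ => h2 θ)
  rw [h3]
  exact intervalIntegral.integral_mul_const _ _

lemma partA_aux (k p : ℕ) (q : ℤ) (T : ℝ → ℝ) (v : ℝ → ℝ) (hv : Continuous v)
    (hvint : (∫ φ in (0:ℝ)..(2*π), v φ) = 0)
    (hform : ∀ θ φ, Yre p q θ φ = T θ * v φ) :
    ∑ i : Fin (2*k+1), sphInt (fun θ φ =>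
      Yre p q θ φ * Yre k ((i:ℤ)-k) θ φ * Yre k ((i:ℤ)-k) θ φ) = 0 := by
  rw [sum_fin k (fun m => sphInt (fun θ φ =>
    Yre p q θ φ * Yre k m θ φ * Yre k m θ φ))]
  have hg0 : sphInt (fun θ φ => Yre p q θ φ * Yre k 0 θ φ * Yre k 0 θ φ) = 0 := by
    rw [sphInt_factored _ (fun θ => T θ * rfct k 0 θ ^ 2 * Real.sin θ) v
      (fun θ φ => by rw [hform, Yre_zero]; ring), hvint, mul_zero]
  have hpair : ∀ t ∈ Finset.range k,
      (fun m => sphInt (fun θ φ => Yre p q θ φ * Yre k m θ φ * Yre k m θ φ)) ((t:ℤ)+1)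
      + (fun m => sphInt (fun θ φ => Yre p q θ φ * Yre k m θ φ * Yre k m θ φ)) (-((t:ℤ)+1))
      = 0 := by
    intro t _
    simp only []
    have hcast : ((t:ℤ)+1) = (((t+1:ℕ)):ℤ) := by push_cast; ring
    rw [hcast]
    set n := t+1 with hn
    have hne : n ≠ 0 := by omega
    have h1 : sphInt (fun θ φ => Yre p q θ φ * Yre k (n:ℤ) θ φ * Yre k (n:ℤ) θ φ)
        = (∫ θ in (0:ℝ)..π, T θ * (Sfct k n θ * (Real.sqrt 2)⁻¹)^2 * Real.sin θ)
          * (∫ φ in (0:ℝ)..(2*π), v φ * Real.cos (n*φ)^2) :=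
      sphInt_factored _ _ _ (fun θ φ => by rw [hform, Yre_pos k n hne]; ring)
    have h2 : sphInt (fun θ φ => Yre p q θ φ * Yre k (-(n:ℤ)) θ φ * Yre k (-(n:ℤ)) θ φ)
        = (∫ θ in (0:ℝ)..π, T θ * (Sfct k n θ * (Real.sqrt 2)⁻¹)^2 * Real.sin θ)
          * (∫ φ in (0:ℝ)..(2*π), v φ * Real.sin (n*φ)^2) :=
      sphInt_factored _ _ _ (fun θ φ => by rw [hform, Yre_neg k n hne]; ring)
    rw [h1, h2, ← mul_add]
    have hadd : (∫ φ in (0:ℝ)..(2*π), v φ * Real.cos (n*φ)^2)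
        + (∫ φ in (0:ℝ)..(2*π), v φ * Real.sin (n*φ)^2) = 0 := by
      have hc1 : Continuous fun φ : ℝ => Real.cos ((n:ℝ)*φ)^2 :=
        (Real.continuous_cos.comp ((continuous_const.mul continuous_id))).pow 2
      have hc2 : Continuous fun φ : ℝ => Real.sin ((n:ℝ)*φ)^2 :=
        (Real.continuous_sin.comp ((continuous_const.mul continuous_id))).pow 2
      rw [← intervalIntegral.integral_add (f := fun φ => v φ * Real.cos (n*φ)^2)
        (g := fun φ => v φ * Real.sin (n*φ)^2)
        ((hv.mul hc1).intervalIntegrable _ _)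
        ((hv.mul hc2).intervalIntegrable _ _)]
      rw [show (fun φ => v φ * Real.cos (n*φ)^2 + v φ * Real.sin (n*φ)^2) = v from
        funext fun φ => by
          rw [← mul_add, add_comm, Real.sin_sq_add_cos_sq, mul_one]]
      exact hvint
    rw [hadd, mul_zero]
  rw [hg0, Finset.sum_congr rfl hpair]
  simp


lemma bracket_eq (k : ℕ) (θ : ℝ) :
    rfct k 0 θ^2 + ∑ t ∈ Finset.range k, Sfct k (t+1) θ^2 / 2
      = ((2*k+1)/(4*Real.pi)) * (((2:ℝ)^k * k.factorial)⁻¹)^2 * (Hsum k).coeff 0 := by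
  rw [← Hsum_eval k (Real.cos θ), Hsum, Polynomial.eval_finset_sum, Finset.sum_range_succ']
  rw [rfct_zero_sq]
  have hsum : ∑ t ∈ Finset.range k, Sfct k (t+1) θ^2 / 2
      = ∑ t ∈ Finset.range k, (((2*k+1)/(4*Real.pi)) * (((2:ℝ)^k * k.factorial)⁻¹)^2 *
        (4 * ((k-(t+1)).factorial/((k+(t+1)).factorial:ℝ)) * (1-Real.cos θ^2)^(t+1) *
          (Upoly k (k+(t+1))).eval (Real.cos θ)^2)) / 2 :=
    Finset.sum_congr rfl (fun t ht => by
      rw [Sfct_sq k (t+1) (by omega) (Finset.mem_range.mp ht) θ])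
  rw [hsum]
  simp only [if_neg (Nat.succ_ne_zero _), eq_self_iff_true, if_true, Polynomial.eval_mul,
    Polynomial.eval_C, Polynomial.eval_pow, Polynomial.eval_sub, Polynomial.eval_one,
    Polynomial.eval_X, Polynomial.eval_ofNat, pow_zero, one_mul, Nat.add_zero, mul_one, dk,
    Nat.sub_zero]
  rw [div_self (Nat.cast_ne_zero.mpr (Nat.factorial_ne_zero k) : ((k.factorial:ℝ)) ≠ 0)]
  rw [mul_add, Finset.mul_sum]
  rw [add_comm]
  congr 1
  · apply Finset.sum_congr rfl
    intro t ht
    ring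
  · ring

lemma sq_inv_sqrt_two : ((Real.sqrt 2)⁻¹)^2 = (2:ℝ)⁻¹ := by
  rw [inv_pow, Real.sq_sqrt]
  norm_num

lemma integral_one_2pi : (∫ _ in (0:ℝ)..(2*π), (1:ℝ)) = 2*π := by
  simp

lemma partB (k p : ℕ) (hp : 1 ≤ p) :
    ∑ i : Fin (2*k+1), sphInt (fun θ φ =>
      Yre p 0 θ φ * Yre k ((i:ℤ)-k) θ φ * Yre k ((i:ℤ)-k) θ φ) = 0 := by
  rw [sum_fin k (fun m => sphInt (fun θ φ =>
    Yre p 0 θ φ * Yre k m θ φ * Yre k m θ φ))]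
  have hg0 : sphInt (fun θ φ => Yre p 0 θ φ * Yre k 0 θ φ * Yre k 0 θ φ)
      = (∫ θ in (0:ℝ)..π, rfct p 0 θ * rfct k 0 θ^2 * Real.sin θ) * (2*π) := by
    rw [sphInt_factored _ (fun θ => rfct p 0 θ * rfct k 0 θ^2 * Real.sin θ) (fun _ => (1:ℝ))
      (fun θ φ => by simp only [Yre_zero]; ring), integral_one_2pi]
  have hpair : ∀ t ∈ Finset.range k,
      (fun m => sphInt (fun θ φ => Yre p 0 θ φ * Yre k m θ φ * Yre k m θ φ)) ((t:ℤ)+1)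
      + (fun m => sphInt (fun θ φ => Yre p 0 θ φ * Yre k m θ φ * Yre k m θ φ)) (-((t:ℤ)+1))
      = (∫ θ in (0:ℝ)..π, rfct p 0 θ * (Sfct k (t+1) θ^2/2) * Real.sin θ) * (2*π) := by
    intro t _
    simp only []
    have hcast : ((t:ℤ)+1) = (((t+1:ℕ)):ℤ) := by push_cast; ring
    rw [hcast]
    set n := t+1 with hn
    have hne : n ≠ 0 := by omega
    have h1 : sphInt (fun θ φ => Yre p 0 θ φ * Yre k (n:ℤ) θ φ * Yre k (n:ℤ) θ φ)
        = (∫ θ in (0:ℝ)..π, rfct p 0 θ * (Sfct k n θ^2/2) * Real.sin θ)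
          * (∫ φ in (0:ℝ)..(2*π), Real.cos (n*φ)^2) :=
      sphInt_factored _ _ _ (fun θ φ => by
        rw [Yre_zero, Yre_pos k n hne]
        linear_combination (rfct p 0 θ * Real.sin θ * Sfct k n θ^2 * Real.cos ((n:ℝ)*φ)^2)
          * sq_inv_sqrt_two)
    have h2 : sphInt (fun θ φ => Yre p 0 θ φ * Yre k (-(n:ℤ)) θ φ * Yre k (-(n:ℤ)) θ φ)
        = (∫ θ in (0:ℝ)..π, rfct p 0 θ * (Sfct k n θ^2/2) * Real.sin θ)
          * (∫ φ in (0:ℝ)..(2*π), Real.sin (n*φ)^2) :=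
      sphInt_factored _ _ _ (fun θ φ => by
        rw [Yre_zero, Yre_neg k n hne]
        linear_combination (rfct p 0 θ * Real.sin θ * Sfct k n θ^2 * Real.sin ((n:ℝ)*φ)^2)
          * sq_inv_sqrt_two)
    rw [h1, h2, ← mul_add]
    congr 1
    have hc1 : Continuous fun φ : ℝ => Real.cos ((n:ℝ)*φ)^2 :=
      (Real.continuous_cos.comp ((continuous_const.mul continuous_id))).pow 2
    have hc2 : Continuous fun φ : ℝ => Real.sin ((n:ℝ)*φ)^2 :=
      (Real.continuous_sin.comp ((continuous_const.mul continuous_id))).pow 2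
    rw [← intervalIntegral.integral_add (hc1.intervalIntegrable _ _)
      (hc2.intervalIntegrable _ _)]
    rw [show (fun φ => Real.cos ((n:ℝ)*φ)^2 + Real.sin ((n:ℝ)*φ)^2) = fun _ => (1:ℝ) from
      funext fun φ => by rw [add_comm, Real.sin_sq_add_cos_sq]]
    exact integral_one_2pi
  rw [hg0, Finset.sum_congr rfl hpair, ← Finset.sum_mul, ← add_mul]
  have hcont_rp : Continuous (fun θ => rfct p 0 θ) := by
    rw [show (fun θ => rfct p 0 θ) = fun θ =>
      Real.sqrt ((2*p+1)/(4*Real.pi)) * ((2:ℝ)^p * p.factorial)⁻¹ *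
        (Upoly p p).eval (Real.cos θ) from funext (rfct_zero_eq p)]
    exact continuous_const.mul ((Polynomial.continuous _).comp Real.continuous_cos)
  have hcont_rk : Continuous (fun θ => rfct k 0 θ^2) := by
    rw [show (fun θ => rfct k 0 θ^2) = fun θ =>
      ((2*k+1)/(4*Real.pi)) * (((2:ℝ)^k * k.factorial)⁻¹)^2 *
        (Upoly k k).eval (Real.cos θ)^2 from funext (rfct_zero_sq k)]
    exact continuous_const.mul (((Polynomial.continuous _).comp Real.continuous_cos).pow 2)
  have hcont_s : ∀ t, t ∈ Finset.range k → Continuous (fun θ => Sfct k (t+1) θ^2) := by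
    intro t ht
    rw [show (fun θ => Sfct k (t+1) θ^2) = fun θ =>
      ((2*k+1)/(4*Real.pi)) * (((2:ℝ)^k * k.factorial)⁻¹)^2 *
        (4 * ((k-(t+1)).factorial/((k+(t+1)).factorial:ℝ)) * (1-Real.cos θ^2)^(t+1) *
          (Upoly k (k+(t+1))).eval (Real.cos θ)^2) from
      funext (Sfct_sq k (t+1) (by omega) (Finset.mem_range.mp ht))]
    exact continuous_const.mul
      ((continuous_const.mul (((continuous_const.sub (Real.continuous_cos.pow 2)).pow (t+1))))
        |>.mul (((Polynomial.continuous _).comp Real.continuous_cos).pow 2))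
  have hint : ∀ t ∈ Finset.range k, IntervalIntegrable
      (fun θ => rfct p 0 θ * (Sfct k (t+1) θ^2/2) * Real.sin θ)
      MeasureTheory.volume 0 π := by
    intro t ht
    exact ((hcont_rp.mul ((hcont_s t ht).div_const 2)).mul Real.continuous_sin).intervalIntegrable _ _
  have hcont_ct : ∀ t ∈ Finset.range k,
      Continuous (fun θ => rfct p 0 θ * (Sfct k (t+1) θ^2/2) * Real.sin θ) := by
    intro t ht
    exact (hcont_rp.mul ((hcont_s t ht).div_const 2)).mul Real.continuous_sin
  have hintsum : ∑ t ∈ Finset.range k,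
      (∫ θ in (0:ℝ)..π, rfct p 0 θ * (Sfct k (t+1) θ^2/2) * Real.sin θ)
      = ∫ θ in (0:ℝ)..π,
        ∑ t ∈ Finset.range k, rfct p 0 θ * (Sfct k (t+1) θ^2/2) * Real.sin θ :=
    (intervalIntegral.integral_finset_sum hint).symm
  rw [hintsum, ← intervalIntegral.integral_add
    (f := fun θ => rfct p 0 θ * rfct k 0 θ^2 * Real.sin θ)
    (g := fun θ => ∑ t ∈ Finset.range k, rfct p 0 θ * (Sfct k (t+1) θ^2/2) * Real.sin θ)
    (((hcont_rp.mul hcont_rk).mul Real.continuous_sin).intervalIntegrable _ _)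
    ((continuous_finset_sum _ hcont_ct).intervalIntegrable _ _)]
  have hpt : ∀ θ : ℝ, (rfct p 0 θ * rfct k 0 θ^2 * Real.sin θ
        + ∑ t ∈ Finset.range k, rfct p 0 θ * (Sfct k (t+1) θ^2/2) * Real.sin θ)
      = (((2*k+1)/(4*Real.pi)) * (((2:ℝ)^k * k.factorial)⁻¹)^2 * (Hsum k).coeff 0)
          * (rfct p 0 θ * Real.sin θ) := by
    intro θ
    have hb := bracket_eq k θ
    have hsum2 : ∑ t ∈ Finset.range k, rfct p 0 θ * (Sfct k (t+1) θ^2/2) * Real.sin θ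
        = rfct p 0 θ * Real.sin θ * ∑ t ∈ Finset.range k, Sfct k (t+1) θ^2/2 := by
      rw [Finset.mul_sum]
      exact Finset.sum_congr rfl (fun t _ => by ring)
    rw [hsum2]
    linear_combination (rfct p 0 θ * Real.sin θ) * hb
  rw [show (fun θ => rfct p 0 θ * rfct k 0 θ^2 * Real.sin θ
        + ∑ t ∈ Finset.range k, rfct p 0 θ * (Sfct k (t+1) θ^2/2) * Real.sin θ)
      = fun θ => (((2*k+1)/(4*Real.pi)) * (((2:ℝ)^k * k.factorial)⁻¹)^2 * (Hsum k).coeff 0)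
          * (rfct p 0 θ * Real.sin θ) from funext hpt]
  rw [intervalIntegral.integral_const_mul]
  have hlast : (∫ θ in (0:ℝ)..π, rfct p 0 θ * Real.sin θ) = 0 := by
    rw [show (fun θ => rfct p 0 θ * Real.sin θ)
        = fun θ => (Real.sqrt ((2*p+1)/(4*Real.pi)) * ((2:ℝ)^p * p.factorial)⁻¹) *
            ((Upoly p p).eval (Real.cos θ) * Real.sin θ) from
      funext fun θ => by rw [rfct_zero_eq]; ring]
    rw [intervalIntegral.integral_const_mul, integral_Upoly_cos p hp, mul_zero]
  rw [hlast]
  ring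

end

noncomputable section

/-- The first-order perturbation matrix `M^{(k)}`, with the (finite) sum restricted to
even `p ≤ 2k`; index `i : Fin (2k+1)` corresponds to order `i - k ∈ {-k, …, k}`. -/
def Mmat (k : ℕ) (A : ℕ → ℤ → ℝ) : Matrix (Fin (2 * k + 1)) (Fin (2 * k + 1)) ℝ :=
  Matrix.of fun m n =>
    -(1 / 2) * ∑ p ∈ (Finset.range (2 * k + 1)).filter (fun p => Even p),
      ∑ q ∈ Finset.Icc (-(p : ℤ)) (p : ℤ),
        A p q * ((p : ℝ) * (p + 1) + 2 * k) *
          sphInt (fun θ φ =>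
            Yre p q θ φ * Yre k ((m : ℤ) - k) θ φ * Yre k ((n : ℤ) - k) θ φ)

/-- If `A_{0,0} = 0`, then the trace of `M^{(k)}` is zero. -/
theorem Mmat_trace_zero (k : ℕ) (A : ℕ → ℤ → ℝ) (hA : A 0 0 = 0) :
    Matrix.trace (Mmat k A) = 0 := by
  rw [Matrix.trace]
  have h1 : ∀ i : Fin (2*k+1), (Mmat k A).diag i
      = -(1/2) * ∑ p ∈ (Finset.range (2*k+1)).filter (fun p => Even p),
          ∑ q ∈ Finset.Icc (-(p:ℤ)) (p:ℤ),
            A p q * ((p:ℝ)*(p+1) + 2*k) * sphInt (fun θ φ =>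
              Yre p q θ φ * Yre k ((i:ℤ)-k) θ φ * Yre k ((i:ℤ)-k) θ φ) := fun i => rfl
  rw [Finset.sum_congr rfl (fun i _ => h1 i), ← Finset.mul_sum]
  rw [Finset.sum_comm]
  have h2 : ∀ p ∈ (Finset.range (2*k+1)).filter (fun p => Even p),
      (∑ i : Fin (2*k+1), ∑ q ∈ Finset.Icc (-(p:ℤ)) (p:ℤ),
        A p q * ((p:ℝ)*(p+1) + 2*k) * sphInt (fun θ φ =>
          Yre p q θ φ * Yre k ((i:ℤ)-k) θ φ * Yre k ((i:ℤ)-k) θ φ)) = 0 := by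
    intro p _
    rw [Finset.sum_comm]
    apply Finset.sum_eq_zero
    intro q _
    rw [← Finset.mul_sum]
    rcases eq_or_ne q 0 with rfl | hq0
    · rcases eq_or_ne p 0 with rfl | hp0
      · rw [hA]
        simp
    
      · rw [partB k p (by omega)]
        ring
    · obtain ⟨n, hn⟩ : ∃ n : ℕ, q = (n:ℤ) ∨ q = -(n:ℤ) := ⟨q.natAbs, by omega⟩
      have hne : n ≠ 0 := by
        rintro rfl
        rcases hn with rfl | rfl <;> simp at hq0
      rcases hn with rfl | rfl
      · rw [partA_aux k p (n:ℤ) (fun θ => Sfct p n θ * (Real.sqrt 2)⁻¹)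
          (fun φ => Real.cos ((n:ℝ)*φ))
          (Real.continuous_cos.comp (continuous_const.mul continuous_id))
          (integral_cos_nat n hne) (fun θ φ => Yre_pos p n hne θ φ)]
        ring
      · rw [partA_aux k p (-(n:ℤ)) (fun θ => Sfct p n θ * (Real.sqrt 2)⁻¹)
          (fun φ => Real.sin ((n:ℝ)*φ))
          (Real.continuous_sin.comp (continuous_const.mul continuous_id))
          (integral_sin_nat n hne) (fun θ φ => Yre_neg p n hne θ φ)]
        ring
  rw [Finset.sum_eq_zero h2, mul_zero]

end
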